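/- Let n be a positive integer and let x, y be symmetric n×n complex matrices (xᵀ = x, yᵀ = y) such that I − x xᴴ, I − xᴴ x, and I − y yᴴ are (Hermitian) positive definite and the matrices I − xᴴ y, I − y xᴴ, and I − x yᴴ are invertible. Let φ_x(y) = (I − x xᴴ)^{−1/2} (y − x) (I − xᴴ y)^{−1} (I − xᴴ x)^{1/2}. Then I − φ_x(y) · φ_x(y)ᴴ = (I − x xᴴ)^{1/2} (I − y xᴴ)^{−1} (I − y yᴴ) (I − x yᴴ)^{−1} (I − x xᴴ)^{1/2}. -/

import Mathlib

/-!
Write `s = xᴴ`, `t = yᴴ`; everything reduces to identities valid in any ring. The push-through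
rule `s (1 - y s)⁻¹ = (1 - s y)⁻¹ s` gives the intertwining relation
`(1 - x s)(1 - y s)⁻¹(y - x) = (y - x)(1 - s y)⁻¹(1 - s x)` and the decomposition
`1 - y t = (1 - y s)(1 - x s)⁻¹(1 - x t) - (y - x)(1 - s x)⁻¹(t - s)`. Substituting the
latter into `(1 - x s)(1 - y s)⁻¹(1 - y t)(1 - x t)⁻¹(1 - x s)` and applying the former on
both sides leaves `(1 - x s) - (y - x)(1 - s y)⁻¹(1 - s x)(1 - t x)⁻¹(t - s)`, which is
`A (1 - φ φᴴ) Aᴴ` as soon as `A Aᴴ = 1 - x xᴴ` and `B Bᴴ = 1 - xᴴ x`.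
-/

open Matrix
open scoped ComplexOrder

/-- The positive semidefinite square root of a positive semidefinite matrix
(the definition `Matrix.PosSemidef.sqrt` of the older Mathlib, since removed). -/
noncomputable def Matrix.PosSemidef.sqrt {n : Type*} [Fintype n] [DecidableEq n]
    {𝕜 : Type*} [RCLike 𝕜] {A : Matrix n n 𝕜} (hA : A.PosSemidef) : Matrix n n 𝕜 :=
  hA.1.eigenvectorUnitary.1 * diagonal ((↑) ∘ (√·) ∘ hA.1.eigenvalues) *
  (star hA.1.eigenvectorUnitary : Matrix n n 𝕜)

open scoped Ring

section Ring

variable {R : Type*} [Ring R]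

theorem mul_ringInverse_one_sub_mul_comm {a b : R} (hab : IsUnit (1 - a * b))
    (hba : IsUnit (1 - b * a)) : b * (1 - a * b)⁻¹ʳ = (1 - b * a)⁻¹ʳ * b := by
  rw [eq_comm, Ring.inverse_mul_eq_iff_eq_mul _ _ _ hba, ← mul_assoc,
    show (1 - b * a) * b = b * (1 - a * b) by noncomm_ring, Ring.mul_inverse_cancel_right _ _ hab]

theorem one_sub_mul_ringInverse_mul_sub {x y s : R} (hsy : IsUnit (1 - s * y))
    (hys : IsUnit (1 - y * s)) :
    (1 - x * s) * (1 - y * s)⁻¹ʳ * (y - x) = (y - x) * (1 - s * y)⁻¹ʳ * (1 - s * x) := by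
  have hl : (1 - x * s) * (1 - y * s)⁻¹ʳ = 1 + (y - x) * (s * (1 - y * s)⁻¹ʳ) := by
    rw [show 1 - x * s = (1 - y * s) + (y - x) * s by noncomm_ring, add_mul,
      Ring.mul_inverse_cancel _ hys, mul_assoc]
  have hr : (1 - s * y)⁻¹ʳ * (1 - s * x) = 1 + (1 - s * y)⁻¹ʳ * s * (y - x) := by
    rw [show 1 - s * x = (1 - s * y) + s * (y - x) by noncomm_ring, mul_add,
      Ring.inverse_mul_cancel _ hsy, mul_assoc]
  rw [hl, mul_assoc (y - x), hr, mul_ringInverse_one_sub_mul_comm hys hsy]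
  noncomm_ring

theorem one_sub_mul_ringInverse_mul_one_sub {x y s t : R} (hxs : IsUnit (1 - x * s))
    (hsx : IsUnit (1 - s * x)) :
    (1 - y * s) * (1 - x * s)⁻¹ʳ * (1 - x * t) =
      1 - y * t + (y - x) * (1 - s * x)⁻¹ʳ * (t - s) := by
  have hl : (1 - y * s) * (1 - x * s)⁻¹ʳ = 1 - (y - x) * (s * (1 - x * s)⁻¹ʳ) := by
    rw [show 1 - y * s = (1 - x * s) - (y - x) * s by noncomm_ring, sub_mul,
      Ring.mul_inverse_cancel _ hxs, mul_assoc]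
  have hr : (1 - s * x)⁻¹ʳ * s * (1 - x * t) = t + (1 - s * x)⁻¹ʳ * (s - t) := by
    rw [mul_assoc, show s * (1 - x * t) = (1 - s * x) * t + (s - t) by noncomm_ring, mul_add,
      Ring.inverse_mul_cancel_left _ _ hsx]
  calc (1 - y * s) * (1 - x * s)⁻¹ʳ * (1 - x * t)
      = 1 - x * t - (y - x) * ((1 - s * x)⁻¹ʳ * s * (1 - x * t)) := by
        rw [hl, mul_ringInverse_one_sub_mul_comm hxs hsx]; noncomm_ring
    _ = 1 - y * t + (y - x) * (1 - s * x)⁻¹ʳ * (t - s) := by rw [hr]; noncomm_ring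

theorem one_sub_mul_sub_mul_ringInverse {x y s t : R} (hxs : IsUnit (1 - x * s))
    (hsx : IsUnit (1 - s * x)) (hsy : IsUnit (1 - s * y)) (hys : IsUnit (1 - y * s))
    (hxt : IsUnit (1 - x * t)) (htx : IsUnit (1 - t * x)) :
    1 - x * s - (y - x) * (1 - s * y)⁻¹ʳ * (1 - s * x) * (1 - t * x)⁻¹ʳ * (t - s) =
      (1 - x * s) * (1 - y * s)⁻¹ʳ * (1 - y * t) * (1 - x * t)⁻¹ʳ * (1 - x * s) := by
  have hyt : 1 - y * t = (1 - y * s) * (1 - x * s)⁻¹ʳ * (1 - x * t) -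
      (y - x) * (1 - s * x)⁻¹ʳ * (t - s) := by
    rw [one_sub_mul_ringInverse_mul_one_sub hxs hsx]; abel
  symm
  calc (1 - x * s) * (1 - y * s)⁻¹ʳ * (1 - y * t) * (1 - x * t)⁻¹ʳ * (1 - x * s)
      = 1 - x * s - (1 - x * s) * (1 - y * s)⁻¹ʳ * (y - x) * (1 - s * x)⁻¹ʳ *
          ((t - s) * (1 - x * t)⁻¹ʳ * (1 - x * s)) := by
        rw [hyt, mul_sub ((1 - x * s) * (1 - y * s)⁻¹ʳ), sub_mul, sub_mul]
        congr 1
        · simp only [mul_assoc, Ring.inverse_mul_cancel_left _ _ hys,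
            Ring.mul_inverse_cancel_left _ _ hxt, Ring.mul_inverse_cancel_left _ _ hxs]
        · simp only [mul_assoc]
    _ = 1 - x * s - (y - x) * (1 - s * y)⁻¹ʳ * (1 - s * x) * (1 - s * x)⁻¹ʳ *
          ((1 - s * x) * (1 - t * x)⁻¹ʳ * (t - s)) := by
        rw [one_sub_mul_ringInverse_mul_sub hsy hys, one_sub_mul_ringInverse_mul_sub hxt htx]
    _ = 1 - x * s - (y - x) * (1 - s * y)⁻¹ʳ * (1 - s * x) * (1 - t * x)⁻¹ʳ * (t - s) := by
        simp only [mul_assoc, Ring.mul_inverse_cancel_left _ _ hsx]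

end Ring

section StarRing

variable {R : Type*} [Ring R] [StarRing R]

theorem one_sub_mobius_mul_star {x y a b : R} (ha : IsUnit a)
    (haa : a * star a = 1 - x * star x) (hbb : b * star b = 1 - star x * x)
    (hx'x : IsUnit (1 - star x * x)) (hx'y : IsUnit (1 - star x * y))
    (hyx' : IsUnit (1 - y * star x)) (hxy' : IsUnit (1 - x * star y)) :
    1 - (a⁻¹ʳ * (y - x) * (1 - star x * y)⁻¹ʳ * b) *
        star (a⁻¹ʳ * (y - x) * (1 - star x * y)⁻¹ʳ * b) =
      star a * (1 - y * star x)⁻¹ʳ * (1 - y * star y) * (1 - x * star y)⁻¹ʳ * a := by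
  have hcore := one_sub_mul_sub_mul_ringInverse (t := star y) (haa ▸ ha.mul ha.star) hx'x hx'y
    hyx' hxy' (by simpa using hx'y.star)
  have hone : (1 : R) = a⁻¹ʳ * (1 - x * star x) * (star a)⁻¹ʳ := by
    rw [← haa, Ring.inverse_mul_cancel_left _ _ ha, Ring.mul_inverse_cancel _ ha.star]
  calc 1 - (a⁻¹ʳ * (y - x) * (1 - star x * y)⁻¹ʳ * b) *
        star (a⁻¹ʳ * (y - x) * (1 - star x * y)⁻¹ʳ * b)
      = a⁻¹ʳ * (1 - x * star x - (y - x) * (1 - star x * y)⁻¹ʳ * (1 - star x * x) *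
          (1 - star y * x)⁻¹ʳ * (star y - star x)) * (star a)⁻¹ʳ := by
        rw [← hbb]
        nth_rw 1 [hone]
        simp only [star_mul, star_sub, star_one, star_star, ← Ring.inverse_star, mul_sub, sub_mul,
          mul_assoc]
    _ = star a * (1 - y * star x)⁻¹ʳ * (1 - y * star y) * (1 - x * star y)⁻¹ʳ * a := by
        rw [hcore, ← haa]
        simp only [mul_assoc, Ring.inverse_mul_cancel_left _ _ ha,
          Ring.mul_inverse_cancel _ ha.star, mul_one]

end StarRing

namespace Matrix

variable {n 𝕜 : Type*} [Fintype n] [DecidableEq n] [RCLike 𝕜] {A : Matrix n n 𝕜}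

theorem PosSemidef.sqrt_mul_self (hA : A.PosSemidef) : hA.sqrt * hA.sqrt = A := by
  have hU : (star hA.1.eigenvectorUnitary : Matrix n n 𝕜) * hA.1.eigenvectorUnitary.1 = 1 :=
    Unitary.star_mul_self_of_mem hA.1.eigenvectorUnitary.2
  have hD : diagonal (((↑) ∘ (√·) ∘ hA.1.eigenvalues) : n → 𝕜) *
      diagonal ((↑) ∘ (√·) ∘ hA.1.eigenvalues) =
        diagonal (RCLike.ofReal ∘ hA.1.eigenvalues) := by
    rw [diagonal_mul_diagonal]
    congr 1
    funext i
    simp only [Function.comp_apply]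
    rw [← RCLike.ofReal_mul, Real.mul_self_sqrt (hA.eigenvalues_nonneg i)]
  conv_rhs => rw [hA.1.spectral_theorem, Unitary.conjStarAlgAut_apply, ← hD]
  simp only [sqrt, Matrix.mul_assoc]
  rw [← Matrix.mul_assoc _ hA.1.eigenvectorUnitary.1, hU, Matrix.one_mul]

theorem PosSemidef.isHermitian_sqrt (hA : A.PosSemidef) : hA.sqrt.IsHermitian :=
  isHermitian_mul_mul_conjTranspose _ <|
    isHermitian_diagonal_iff.mpr fun _ ↦ RCLike.conj_ofReal _

theorem PosDef.isUnit_sqrt (hA : A.PosDef) : IsUnit hA.posSemidef.sqrt := by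
  have h : IsUnit (hA.posSemidef.sqrt * hA.posSemidef.sqrt).det := by
    rw [hA.posSemidef.sqrt_mul_self, ← isUnit_iff_isUnit_det]
    exact hA.isUnit
  rw [det_mul] at h
  exact (isUnit_iff_isUnit_det _).mpr (isUnit_of_mul_isUnit_left h)

end Matrix

theorem siegel_disk_automorphism_identity_general {n : ℕ}
    (x y : Matrix (Fin n) (Fin n) ℂ)
    (h1 : (1 - x * xᴴ).PosDef) (h2 : (1 - xᴴ * x).PosDef)
    (h4 : IsUnit (1 - xᴴ * y)) (h5 : IsUnit (1 - y * xᴴ)) (h6 : IsUnit (1 - x * yᴴ)) :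
    1 - ((h1.posSemidef.sqrt)⁻¹ * (y - x) * (1 - xᴴ * y)⁻¹ * h2.posSemidef.sqrt) *
        ((h1.posSemidef.sqrt)⁻¹ * (y - x) * (1 - xᴴ * y)⁻¹ * h2.posSemidef.sqrt)ᴴ =
      h1.posSemidef.sqrt * (1 - y * xᴴ)⁻¹ * (1 - y * yᴴ) * (1 - x * yᴴ)⁻¹ *
        h1.posSemidef.sqrt := by
  have hA := h1.posSemidef.isHermitian_sqrt
  have hB := h2.posSemidef.isHermitian_sqrt
  simp only [nonsing_inv_eq_ringInverse]
  simpa only [star_eq_conjTranspose, hA.eq] using one_sub_mobius_mul_star h1.isUnit_sqrt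
    (by rw [star_eq_conjTranspose, hA.eq, h1.posSemidef.sqrt_mul_self, star_eq_conjTranspose])
    (by rw [star_eq_conjTranspose, hB.eq, h2.posSemidef.sqrt_mul_self, star_eq_conjTranspose])
    h2.isUnit h4 h5 h6

/-- Lemma C.2: with `z = φ_x(y) = (I - x xᴴ)^{-1/2} (y - x) (I - xᴴ y)⁻¹ (I - xᴴ x)^{1/2}`,
`I - z zᴴ = (I - x xᴴ)^{1/2} (I - y xᴴ)⁻¹ (I - y yᴴ) (I - x yᴴ)⁻¹ (I - x xᴴ)^{1/2}`. -/
theorem siegel_disk_automorphism_identity {n : ℕ} (hn : 0 < n)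
    (x y : Matrix (Fin n) (Fin n) ℂ)
    (hxs : xᵀ = x) (hys : yᵀ = y)
    (h1 : (1 - x * xᴴ).PosDef) (h2 : (1 - xᴴ * x).PosDef) (h3 : (1 - y * yᴴ).PosDef)
    (h4 : IsUnit (1 - xᴴ * y)) (h5 : IsUnit (1 - y * xᴴ)) (h6 : IsUnit (1 - x * yᴴ)) :
    1 - ((h1.posSemidef.sqrt)⁻¹ * (y - x) * (1 - xᴴ * y)⁻¹ * h2.posSemidef.sqrt) *
        ((h1.posSemidef.sqrt)⁻¹ * (y - x) * (1 - xᴴ * y)⁻¹ * h2.posSemidef.sqrt)ᴴ =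
      h1.posSemidef.sqrt * (1 - y * xᴴ)⁻¹ * (1 - y * yᴴ) * (1 - x * yᴴ)⁻¹ *
        h1.posSemidef.sqrt :=
  siegel_disk_automorphism_identity_general x y h1 h2 h4 h5 h6
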